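/- The value of a read-once expression tree depends on each of its leaf variables: for every read-once expression tree T over Fin n and every variable v labeling a leaf of T, val T does not lie in the subfield of K generated over ℚ by the images of the variables other than v. Consequently, if two read-once expression trees T1 and T2 satisfy val T1 = val T2, then the set of variables labeling the leaves of T1 equals the set of variables labeling the leaves of T2. -/

import Mathlib

/-- The four binary arithmetic operations labeling internal nodes. -/
inductive Op : Type
  | add | sub | mul | div
deriving DecidableEq, Repr

/-- An expression tree over variables `Fin n`: a full binary tree whose leaves
are labeled by variables and whose internal nodes carry an operation. -/
inductive ETree (n : ℕ) : Type
  | leaf (v : Fin n)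
  | node (op : Op) (l r : ETree n)
deriving DecidableEq

/-- The field of rational functions in `n` variables over `ℚ`. -/
abbrev K (n : ℕ) := FractionRing (MvPolynomial (Fin n) ℚ)

/-- The list of variables labeling the leaves, from left to right. -/
def leafList {n : ℕ} : ETree n → List (Fin n)
  | .leaf v => [v]
  | .node _ l r => leafList l ++ leafList r

/-- A tree is read-once (a *valid* expression) if each variable labels at most one leaf. -/
def ReadOnce {n : ℕ} (T : ETree n) : Prop := (leafList T).Nodup

/-- The set of variables labeling leaves of a tree. -/
def leafVars {n : ℕ} (T : ETree n) : Finset (Fin n) := (leafList T).toFinset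

/-- The value of an expression tree in the field of rational functions. -/
noncomputable def val {n : ℕ} : ETree n → K n
  | .leaf v => algebraMap (MvPolynomial (Fin n) ℚ) (K n) (MvPolynomial.X v)
  | .node .add l r => val l + val r
  | .node .sub l r => val l - val r
  | .node .mul l r => val l * val r
  | .node .div l r => val l / val r

/-! Translating `X v ↦ X v + 1` induces an automorphism of the rational function field that
fixes `ℚ` and every other variable, hence fixes the subfield `D_v` they generate, but moves
`X v`; so `X v ∉ D_v`. In a read-once tree `l op r` with `v` a leaf of `l`, the value of `r`
lies in `D_v` and is nonzero (it avoids `D_w` for any leaf `w` of `r`), and for `x ∉ D`,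
`0 ≠ y ∈ D` each of `x op y`, `y op x` avoids `D`. Finally, if `v` is a leaf of `T₁` but not
of `T₂`, then `val T₂ ∈ D_v ∌ val T₁`. -/

open MvPolynomial

namespace Op

variable {F : Type*} [Field F]

@[simp]
def apply : Op → F → F → F
  | add, x, y => x + y
  | sub, x, y => x - y
  | mul, x, y => x * y
  | div, x, y => x / y

variable {S : Subfield F} {x y : F}

theorem apply_mem (op : Op) (hx : x ∈ S) (hy : y ∈ S) : op.apply x y ∈ S := by
  cases op
  exacts [add_mem hx hy, sub_mem hx hy, mul_mem hx hy, div_mem hx hy]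

theorem apply_notMem_of_left (op : Op) (hx : x ∉ S) (hy : y ∈ S) (hy0 : y ≠ 0) :
    op.apply x y ∉ S := by
  intro h
  apply hx
  cases op
  · simpa using sub_mem h hy
  · simpa using add_mem h hy
  · simpa [hy0] using div_mem h hy
  · simpa [hy0] using mul_mem h hy

theorem apply_notMem_of_right (op : Op) (hx : x ∈ S) (hx0 : x ≠ 0) (hy : y ∉ S) :
    op.apply x y ∉ S := by
  intro h
  apply hy
  cases op
  · simpa using sub_mem h hx
  · simpa using sub_mem hx h
  · simpa [hx0] using div_mem h hx
  · simpa [div_div_cancel₀ hx0] using div_mem hx h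

end Op

theorem val_node {n : ℕ} (op : Op) (l r : ETree n) :
    val (.node op l r) = op.apply (val l) (val r) := by
  cases op <;> rfl

section ShiftVar

variable {R ι : Type*} [CommRing R] [DecidableEq ι]

noncomputable def MvPolynomial.shiftVar (v : ι) : MvPolynomial ι R ≃ₐ[R] MvPolynomial ι R :=
  AlgEquiv.ofAlgHom (aeval (Function.update X v (X v + 1)))
    (aeval (Function.update X v (X v - 1)))
    (by ext u; by_cases h : u = v <;> simp [h])
    (by ext u; by_cases h : u = v <;> simp [h])

theorem MvPolynomial.shiftVar_X_self (v : ι) : shiftVar (R := R) v (X v) = X v + 1 := by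
  simp [shiftVar]

theorem MvPolynomial.shiftVar_X_of_ne {u v : ι} (h : u ≠ v) :
    shiftVar (R := R) v (X u) = X u := by
  simp [shiftVar, h]

end ShiftVar

section OtherVars

variable {ι : Type*}

noncomputable def otherVarsSubfield (v : ι) : Subfield (FractionRing (MvPolynomial ι ℚ)) :=
  Subfield.closure
    (Set.range (algebraMap ℚ (FractionRing (MvPolynomial ι ℚ))) ∪
      {x | ∃ u : ι, u ≠ v ∧ x = algebraMap (MvPolynomial ι ℚ) _ (X u)})

theorem algebraMap_X_notMem_otherVarsSubfield [DecidableEq ι] (v : ι) :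
    algebraMap (MvPolynomial ι ℚ) (FractionRing (MvPolynomial ι ℚ)) (X v) ∉
      otherVarsSubfield v := by
  set σ : FractionRing (MvPolynomial ι ℚ) ≃+* FractionRing (MvPolynomial ι ℚ) :=
    IsFractionRing.ringEquivOfRingEquiv (shiftVar (R := ℚ) v).toRingEquiv
  have hσ : ∀ p, σ (algebraMap _ _ p) = algebraMap _ _ (shiftVar v p) :=
    IsFractionRing.ringEquivOfRingEquiv_algebraMap _
  have hfix : otherVarsSubfield v ≤ (σ : _ →+* _).eqLocusField (RingHom.id _) := by
    refine Subfield.closure_le.mpr ?_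
    rintro _ (⟨q, rfl⟩ | ⟨u, hu, rfl⟩)
    · exact RingHom.map_rat_algebraMap _ q
    · simp [hσ, shiftVar_X_of_ne hu]
  intro h
  have := hfix h
  simp [hσ, shiftVar_X_self] at this

end OtherVars

section ReadOnce

variable {n : ℕ}

theorem leafList_ne_nil (T : ETree n) : leafList T ≠ [] := by
  induction T with
  | leaf v => simp [leafList]
  | node _ l r ihl _ => simp [leafList, ihl]

theorem mem_leafVars {T : ETree n} {v : Fin n} : v ∈ leafVars T ↔ v ∈ leafList T :=
  List.mem_toFinset

theorem val_mem_otherVarsSubfield {v : Fin n} (T : ETree n) (hv : v ∉ leafList T) :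
    val T ∈ otherVarsSubfield v := by
  induction T with
  | leaf u =>
    exact Subfield.subset_closure (.inr ⟨u, by simpa [leafList, eq_comm] using hv, rfl⟩)
  | node op l r ihl ihr =>
    simp only [leafList, List.mem_append, not_or] at hv
    rw [val_node]
    exact op.apply_mem (ihl hv.1) (ihr hv.2)

theorem val_notMem_otherVarsSubfield {T : ETree n} (hT : ReadOnce T) {v : Fin n}
    (hv : v ∈ leafList T) : val T ∉ otherVarsSubfield v := by
  induction T generalizing v with
  | leaf w =>
    obtain rfl : v = w := by simpa [leafList] using hv
    exact algebraMap_X_notMem_otherVarsSubfield v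
  | node op l r ihl ihr =>
    obtain ⟨hl, hr, hdisj⟩ := List.nodup_append.mp hT
    have val_ne_zero {T : ETree n}
        (ih : ∀ {w}, w ∈ leafList T → val T ∉ otherVarsSubfield w) : val T ≠ 0 := by
      obtain ⟨w, hw⟩ := List.exists_mem_of_ne_nil _ (leafList_ne_nil T)
      exact fun h0 => ih hw (h0 ▸ zero_mem _)
    rw [val_node]
    rcases List.mem_append.mp hv with hvl | hvr
    · refine op.apply_notMem_of_left (ihl hl hvl) ?_ (val_ne_zero (ihr hr))
      exact val_mem_otherVarsSubfield r fun hvr => hdisj v hvl v hvr rfl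
    · refine op.apply_notMem_of_right ?_ (val_ne_zero (ihl hl)) (ihr hr hvr)
      exact val_mem_otherVarsSubfield l fun hvl => hdisj v hvl v hvr rfl

theorem leafVars_subset_of_val_eq {T₁ T₂ : ETree n} (h₁ : ReadOnce T₁) (h : val T₁ = val T₂) :
    leafVars T₁ ⊆ leafVars T₂ := by
  intro v hv₁
  by_contra hv₂
  rw [mem_leafVars] at hv₁ hv₂
  exact val_notMem_otherVarsSubfield h₁ hv₁ (h ▸ val_mem_otherVarsSubfield T₂ hv₂)

end ReadOnce

/-- The value of a read-once expression tree depends on each of its leaf variables: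
it lies outside the subfield of `K n` generated over `ℚ` by the images of the other
variables.  Consequently, read-once trees with equal values have equal leaf-variable sets. -/
theorem val_depends_on_every_leaf_var (n : ℕ) :
    (∀ T : ETree n, ReadOnce T → ∀ v ∈ leafVars T,
      val T ∉ Subfield.closure
        (Set.range (algebraMap ℚ (K n)) ∪
          {x : K n | ∃ u : Fin n, u ≠ v ∧
            x = algebraMap (MvPolynomial (Fin n) ℚ) (K n) (MvPolynomial.X u)})) ∧
    (∀ T1 T2 : ETree n, ReadOnce T1 → ReadOnce T2 → val T1 = val T2 →
      leafVars T1 = leafVars T2) :=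
  ⟨fun _ hT _ hv => val_notMem_otherVarsSubfield hT (mem_leafVars.mp hv),
    fun _ _ h₁ h₂ h => (leafVars_subset_of_val_eq h₁ h).antisymm
      (leafVars_subset_of_val_eq h₂ h.symm)⟩
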